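/- arXiv:math/0301157 — 2 statements merged into one kernel-verified Lean document; each statement's English description precedes it below -/
import Mathlib

section
/- Let p, q be real numbers and let k be a positive integer such that V_k(p,q)² − 4q^k ≠ 0. Then for every n ≥ 4, s_5(n; p,q; k) = (U_k(p,q)⁴/(24·(V_k(p,q)² − 4q^k)⁴)) · (V_k(p,q)⁴·(n−1)(n−2)(n−3)(n−4)·U_{n·k}(p,q) − 4q^k·V_k(p,q)³·(n−2)(n−3)(n−4)(2n+3)·U_{(n−1)·k}(p,q) + 12q^(2k)·V_k(p,q)²·(n−3)(n−4)(2n²+4n−1)·U_{(n−2)·k}(p,q) − 8q^(3k)·V_k(p,q)·(n−4)(2n+1)(2n²+2n−9)·U_{(n−3)·k}(p,q) + 16q^(4k)·(n−3)(n−1)(n+1)(n+3)·U_{(n−4)·k}(p,q)). -/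
/-- The generalized Fibonacci sequence: `U 0 = 0`, `U 1 = 1`,
`U (n+2) = p * U (n+1) - q * U n`. -/
def genU (p q : ℝ) : ℕ → ℝ
  | 0 => 0
  | 1 => 1
  | (n + 2) => p * genU p q (n + 1) - q * genU p q n

/-- The generalized Lucas sequence: `V 0 = 2`, `V 1 = p`,
`V (n+2) = p * V (n+1) - q * V n`. -/
def genV (p q : ℝ) : ℕ → ℝ
  | 0 => 2
  | 1 => p
  | (n + 2) => p * genV p q (n + 1) - q * genV p q n

/-- `s_d(n; p, q; k) = ∑_{j₁ + ⋯ + j_d = n} ∏_{i=1}^{d} U_{k jᵢ}(p, q)`,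
the sum being over `d`-tuples of nonnegative integers. -/
def sgen (p q : ℝ) (k d n : ℕ) : ℝ :=
  ∑ t ∈ Finset.Nat.antidiagonalTuple d n, ∏ i, genU p q (k * t i)

section aux

variable (p q : ℝ)

lemma genU_rec (n : ℕ) : genU p q (n+2) = p * genU p q (n+1) - q * genU p q n := by simp [genU]

lemma genV_rec (n : ℕ) : genV p q (n+2) = p * genV p q (n+1) - q * genV p q n := by simp [genV]

lemma genU_add (m n : ℕ) : genU p q (m + n + 1)
    = genU p q (m+1) * genU p q (n+1) - q * (genU p q m * genU p q n) := by
  induction m using Nat.twoStepInduction generalizing n with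
  | zero => simp [genU]
  | one =>
    rw [show (1:ℕ)+n+1 = n+2 from by omega, genU_rec]
    simp [genU]
  | more m ih1 ih2 =>
    have e1 : m + 2 + n + 1 = (m + n + 1) + 2 := by omega
    rw [e1, genU_rec, show m + n + 1 + 1 = m + 1 + n + 1 from by omega, ih2 n, ih1 n,
      show m+1+1 = m+2 from rfl, show m+2+1 = m+1+2 from by omega, genU_rec p q (m+1),
      show m+1+1 = m+2 from rfl, genU_rec p q m]
    ring

lemma genV_eq (n : ℕ) : genV p q (n+1) = genU p q (n+2) - q * genU p q n := by
  induction n using Nat.twoStepInduction with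
  | zero => simp [genU, genV]
  | one => simp [genU, genV]; ring
  | more n ih1 ih2 =>
    rw [genV_rec, ih1, ih2, genU_rec p q (n+2), genU_rec p q (n+1), genU_rec p q n]
    ring

lemma genU_cassini (n : ℕ) : genU p q (n+2) * genU p q n - genU p q (n+1)^2 = -q^n := by
  induction n with
  | zero => simp [genU]
  | succ n ih =>
    rw [show n+1+2 = n+3 from rfl, genU_rec p q (n+1), genU_rec p q n] at *
    rw [pow_succ]
    linear_combination q * ih

lemma genU_two_mul (k : ℕ) : genU p q (2*k) = genV p q k * genU p q k := by
  cases k with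
  | zero => simp [genU]
  | succ j =>
    have e : 2*(j+1) = j + (j+1) + 1 := by omega
    rw [e, genU_add, genV_eq]
    ring

lemma genU_two_mul_add_one (k : ℕ) : genU p q (2*k+1) = genV p q k * genU p q (k+1) - q^k := by
  cases k with
  | zero => simp [genU, genV]; norm_num
  | succ j =>
    have e : 2*(j+1)+1 = (j+1) + (j+1) + 1 := by omega
    rw [e, genU_add, genV_eq, show j+1+1 = j+2 from rfl, pow_succ]
    linear_combination q * genU_cassini p q j

lemma genU_key (k m : ℕ) : genU p q (m + 2*k)
    = genV p q k * genU p q (m + k) - q^k * genU p q m := by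
  induction m using Nat.twoStepInduction with
  | zero => simpa [genU] using genU_two_mul p q k
  | one => simpa [genU, add_comm] using genU_two_mul_add_one p q k
  | more m ih1 ih2 =>
    have e1 : m + 2 + 2*k = (m + 2*k) + 2 := by omega
    have e2 : m + 1 + 2*k = (m + 2*k) + 1 := by omega
    rw [e1, genU_rec, ← e2, ih1, ih2,
      show m + 2 + k = (m + k) + 2 from by omega, genU_rec p q (m+k), genU_rec p q m]
    ring

lemma genU_keyA (k j : ℕ) : genU p q (k*(j+2))
    = genV p q k * genU p q (k*(j+1)) - q^k * genU p q (k*j) := by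
  have h := genU_key p q k (k*j)
  rw [show k*j + 2*k = k*(j+2) from by ring, show k*j + k = k*(j+1) from by ring] at h
  exact h

lemma sgen_succ (k d n : ℕ) :
    sgen p q k (d+1) n
      = ∑ i ∈ Finset.range (n+1), genU p q (k * i) * sgen p q k d (n - i) := by
  have h : sgen p q k (d+1) n
      = ∑ ij ∈ Finset.HasAntidiagonal.antidiagonal n, genU p q (k * ij.1) * sgen p q k d ij.2 := by
    unfold sgen
    simp_rw [Finset.mul_sum, Finset.sum_sigma']
    refine Finset.sum_nbij' (fun t => ⟨(t 0, ∑ i : Fin d, t i.succ), Fin.tail t⟩)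
      (fun x => Fin.cons x.1.1 x.2) ?_ ?_ ?_ ?_ ?_
    · intro t ht
      simp only [Finset.Nat.mem_antidiagonalTuple] at ht
      simp only [Finset.mem_sigma, Finset.HasAntidiagonal.mem_antidiagonal,
        Finset.Nat.mem_antidiagonalTuple]
      exact ⟨by rw [← ht, Fin.sum_univ_succ], rfl⟩
    · rintro ⟨⟨a, b⟩, t⟩ hx
      simp only [Finset.mem_sigma, Finset.HasAntidiagonal.mem_antidiagonal,
        Finset.Nat.mem_antidiagonalTuple] at hx ⊢
      rw [Fin.sum_univ_succ]
      simp [Fin.cons_zero, Fin.cons_succ, hx.2, hx.1]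
    · intro t ht
      simp [Fin.cons_self_tail]
    · rintro ⟨⟨a, b⟩, t⟩ hx
      simp only [Finset.mem_sigma, Finset.HasAntidiagonal.mem_antidiagonal,
        Finset.Nat.mem_antidiagonalTuple] at hx
      simp [Fin.tail_cons, Fin.cons_zero, Fin.cons_succ, hx.2]
    · intro t ht
      rw [Fin.prod_univ_succ]
      rfl
  rw [h, Finset.Nat.sum_antidiagonal_eq_sum_range_succ_mk]

lemma sgen_one_fold (k n : ℕ) : sgen p q k 1 n = genU p q (k * n) := by
  simp [sgen, Finset.Nat.antidiagonalTuple_one]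

lemma sgen_nil (k d : ℕ) : sgen p q k (d+1) 0 = 0 := by
  simp [sgen, Finset.Nat.antidiagonalTuple_zero_right, Fin.prod_univ_succ, genU]

lemma sgen_step (k d n : ℕ) :
    sgen p q k (d+1) (n+2) = genV p q k * sgen p q k (d+1) (n+1)
      - q^k * sgen p q k (d+1) n + genU p q k * sgen p q k d (n+1) := by
  have hA0 : genU p q (k*0) = 0 := by simp [genU]
  have h1 : sgen p q k (d+1) (n+1)
      = ∑ i ∈ Finset.range (n+1), genU p q (k*(i+1)) * sgen p q k d (n-i) := by
    rw [sgen_succ, show n+1+1 = (n+1)+1 from rfl, Finset.sum_range_succ']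
    simp [hA0, Nat.succ_sub_succ, genU]
  have h2 : sgen p q k (d+1) (n+2)
      = ∑ i ∈ Finset.range (n+1), genU p q (k*(i+2)) * sgen p q k d (n-i)
        + genU p q k * sgen p q k d (n+1) := by
    rw [sgen_succ, show n+2+1 = ((n+1)+1)+1 from rfl, Finset.sum_range_succ',
      Finset.sum_range_succ']
    simp [hA0, Nat.succ_sub_succ, genU]
  have h3 : ∑ i ∈ Finset.range (n+1), genU p q (k*(i+2)) * sgen p q k d (n-i)
      = genV p q k * ∑ i ∈ Finset.range (n+1), genU p q (k*(i+1)) * sgen p q k d (n-i)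
        - q^k * ∑ i ∈ Finset.range (n+1), genU p q (k*i) * sgen p q k d (n-i) := by
    rw [Finset.mul_sum, Finset.mul_sum, ← Finset.sum_sub_distrib]
    refine Finset.sum_congr rfl fun i _ => ?_
    rw [genU_keyA p q k i]
    ring
  rw [h2, h3, ← h1, ← sgen_succ]

lemma sgen_at_one (k d : ℕ) : sgen p q k (d+2) 1 = 0 := by
  rw [show d+2 = (d+1)+1 from rfl, sgen_succ]
  cases d with
  | zero =>
    simp [Finset.sum_range_succ, sgen_one_fold, genU]
  | succ e =>
    simp [Finset.sum_range_succ, sgen_nil, genU]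

lemma sgen_two_two (k : ℕ) : sgen p q k 2 2 = (genU p q k)^2 := by
  rw [show (2:ℕ) = 1+1 from rfl, sgen_succ]
  simp [Finset.sum_range_succ, sgen_one_fold, genU]
  ring

lemma sgen_at_two (k d : ℕ) : sgen p q k (d+3) 2 = 0 := by
  rw [show d+3 = (d+2)+1 from rfl, sgen_succ]
  have h1 := sgen_at_one p q k d
  cases d with
  | zero =>
    simp [Finset.sum_range_succ, sgen_nil, h1, genU]
  | succ e =>
    simp [Finset.sum_range_succ, sgen_nil, h1, sgen_at_one, genU]

lemma closed2 (k m : ℕ) :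
    ((genV p q k)^2 - 4*q^k) * sgen p q k 2 (m+1)
      = genU p q k * (genV p q k * (m:ℝ) * genU p q (k*(m+1))
          - 2*q^k*((m:ℝ)+1) * genU p q (k*m)) := by
  induction m using Nat.twoStepInduction with
  | zero =>
    have h1 := sgen_at_one p q k 0
    norm_num at h1 ⊢
    simp [h1, genU]
  | one =>
    have h2 := sgen_two_two p q k
    have e2 : genU p q (k*2) = genV p q k * genU p q (k*1) - q^k * genU p q (k*0) := by
      have h := genU_keyA p q k 0
      rwa [show (0:ℕ)+2 = 2 from rfl, show (0:ℕ)+1 = 1 from rfl] at h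
    norm_num [genU] at e2 ⊢
    rw [h2, e2]
    ring
  | more m ih1 ih2 =>
    have hstep : sgen p q k 2 (m+3) = genV p q k * sgen p q k 2 (m+2)
        - q^k * sgen p q k 2 (m+1) + genU p q k * sgen p q k 1 (m+2) :=
      sgen_step p q k 1 (m+1)
    rw [sgen_one_fold] at hstep
    have e2 := genU_keyA p q k m
    have e3 : genU p q (k*(m+3))
        = genV p q k * genU p q (k*(m+2)) - q^k * genU p q (k*(m+1)) := by
      have h := genU_keyA p q k (m+1)
      rwa [show m+1+2 = m+3 from rfl, show m+1+1 = m+2 from rfl] at h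
    rw [show m+2+1 = m+3 from rfl, e3, e2]
    rw [show m+1+1 = m+2 from rfl, e2] at ih2
    rw [e2] at hstep
    push_cast at ih1 ih2 ⊢
    linear_combination ((genV p q k)^2 - 4*q^k) * hstep + genV p q k * ih2 - q^k * ih1

lemma closed3 (k m : ℕ) :
    2*((genV p q k)^2 - 4*q^k)^2 * sgen p q k 3 (m+1)
      = (genU p q k)^2 *
          ((((genV p q k)^2-4*q^k)*((m:ℝ)+1)^2 - 3*(genV p q k)^2*((m:ℝ)+1)
              + 2*(genV p q k)^2 + 4*q^k) * genU p q (k*(m+1))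
            + 6*(genV p q k)*q^k*((m:ℝ)+1) * genU p q (k*m)) := by
  induction m using Nat.twoStepInduction with
  | zero =>
    have h1 := sgen_at_one p q k 1
    rw [show (0:ℕ)+1 = 1 from rfl, h1, show genU p q (k*0) = 0 from by norm_num [genU]]
    push_cast
    ring
  | one =>
    have h2 := sgen_at_two p q k 0
    have e2 : genU p q (k*2) = genV p q k * genU p q (k*1) - q^k * genU p q (k*0) := by
      have h := genU_keyA p q k 0
      rwa [show (0:ℕ)+2 = 2 from rfl, show (0:ℕ)+1 = 1 from rfl] at h
    norm_num [genU] at h2 e2 ⊢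
    rw [h2, e2]
    ring
  | more m ih1 ih2 =>
    have hstep : sgen p q k 3 (m+3) = genV p q k * sgen p q k 3 (m+2)
        - q^k * sgen p q k 3 (m+1) + genU p q k * sgen p q k 2 (m+2) :=
      sgen_step p q k 2 (m+1)
    have h4 := closed2 p q k (m+1)
    have e2 := genU_keyA p q k m
    have e3 : genU p q (k*(m+3))
        = genV p q k * genU p q (k*(m+2)) - q^k * genU p q (k*(m+1)) := by
      have h := genU_keyA p q k (m+1)
      rwa [show m+1+2 = m+3 from rfl, show m+1+1 = m+2 from rfl] at h
    rw [show m+2+1 = m+3 from rfl, e3, e2]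
    rw [show m+1+1 = m+2 from rfl, e2] at ih2 h4
    push_cast at ih1 ih2 h4 ⊢
    linear_combination (2*((genV p q k)^2 - 4*q^k)^2) * hstep
      + genV p q k * ih2 - q^k * ih1
      + (2*(genU p q k)*((genV p q k)^2 - 4*q^k)) * h4

lemma closed4 (k m : ℕ) :
    6*((genV p q k)^2 - 4*q^k)^3 * sgen p q k 4 (m+1)
      = (genU p q k)^3 *
          ((((genV p q k)^3-4*(genV p q k)*q^k)*((m:ℝ)+1)^3
              + (-6*(genV p q k)^3+24*(genV p q k)*q^k)*((m:ℝ)+1)^2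
              + (11*(genV p q k)^3+16*(genV p q k)*q^k)*((m:ℝ)+1)
              - 6*(genV p q k)^3 - 36*(genV p q k)*q^k) * genU p q (k*(m+1))
            + ((-2*(genV p q k)^2*q^k+8*(q^k)^2)*((m:ℝ)+1)^3
              + (-22*(genV p q k)^2*q^k-32*(q^k)^2)*((m:ℝ)+1)) * genU p q (k*m)) := by
  induction m using Nat.twoStepInduction with
  | zero =>
    have h1 := sgen_at_one p q k 2
    rw [show (0:ℕ)+1 = 1 from rfl, h1, show genU p q (k*0) = 0 from by norm_num [genU]]
    push_cast
    ring
  | one =>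
    have h2 := sgen_at_two p q k 1
    have e2 : genU p q (k*2) = genV p q k * genU p q (k*1) - q^k * genU p q (k*0) := by
      have h := genU_keyA p q k 0
      rwa [show (0:ℕ)+2 = 2 from rfl, show (0:ℕ)+1 = 1 from rfl] at h
    norm_num [genU] at h2 e2 ⊢
    rw [h2, e2]
    ring
  | more m ih1 ih2 =>
    have hstep : sgen p q k 4 (m+3) = genV p q k * sgen p q k 4 (m+2)
        - q^k * sgen p q k 4 (m+1) + genU p q k * sgen p q k 3 (m+2) :=
      sgen_step p q k 3 (m+1)
    have h4 := closed3 p q k (m+1)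
    have e2 := genU_keyA p q k m
    have e3 : genU p q (k*(m+3))
        = genV p q k * genU p q (k*(m+2)) - q^k * genU p q (k*(m+1)) := by
      have h := genU_keyA p q k (m+1)
      rwa [show m+1+2 = m+3 from rfl, show m+1+1 = m+2 from rfl] at h
    rw [show m+2+1 = m+3 from rfl, e3, e2]
    rw [show m+1+1 = m+2 from rfl, e2] at ih2 h4
    push_cast at ih1 ih2 h4 ⊢
    linear_combination (6*((genV p q k)^2 - 4*q^k)^3) * hstep
      + genV p q k * ih2 - q^k * ih1
      + (3*(genU p q k)*((genV p q k)^2 - 4*q^k)) * h4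

lemma closed5 (k m : ℕ) :
    24*((genV p q k)^2 - 4*q^k)^4 * sgen p q k 5 (m+1)
      = (genU p q k)^4 *
          ((((genV p q k)^2-4*q^k)^2*((m:ℝ)+1)^4
              + (-10*(genV p q k)^4+40*(genV p q k)^2*q^k)*((m:ℝ)+1)^3
              + (35*(genV p q k)^4-100*(genV p q k)^2*q^k-160*(q^k)^2)*((m:ℝ)+1)^2
              + (-50*(genV p q k)^4-220*(genV p q k)^2*q^k)*((m:ℝ)+1)
              + 24*(genV p q k)^4+288*(genV p q k)^2*q^k+144*(q^k)^2) * genU p q (k*(m+1))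
            + ((20*(genV p q k)^3*q^k-80*(genV p q k)*(q^k)^2)*((m:ℝ)+1)^3
              + (100*(genV p q k)^3*q^k+440*(genV p q k)*(q^k)^2)*((m:ℝ)+1)) * genU p q (k*m)) := by
  induction m using Nat.twoStepInduction with
  | zero =>
    have h1 := sgen_at_one p q k 3
    rw [show (0:ℕ)+1 = 1 from rfl, h1, show genU p q (k*0) = 0 from by norm_num [genU]]
    push_cast
    ring
  | one =>
    have h2 := sgen_at_two p q k 2
    have e2 : genU p q (k*2) = genV p q k * genU p q (k*1) - q^k * genU p q (k*0) := by
      have h := genU_keyA p q k 0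
      rwa [show (0:ℕ)+2 = 2 from rfl, show (0:ℕ)+1 = 1 from rfl] at h
    norm_num [genU] at h2 e2 ⊢
    rw [h2, e2]
    ring
  | more m ih1 ih2 =>
    have hstep : sgen p q k 5 (m+3) = genV p q k * sgen p q k 5 (m+2)
        - q^k * sgen p q k 5 (m+1) + genU p q k * sgen p q k 4 (m+2) :=
      sgen_step p q k 4 (m+1)
    have h4 := closed4 p q k (m+1)
    have e2 := genU_keyA p q k m
    have e3 : genU p q (k*(m+3))
        = genV p q k * genU p q (k*(m+2)) - q^k * genU p q (k*(m+1)) := by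
      have h := genU_keyA p q k (m+1)
      rwa [show m+1+2 = m+3 from rfl, show m+1+1 = m+2 from rfl] at h
    rw [show m+2+1 = m+3 from rfl, e3, e2]
    rw [show m+1+1 = m+2 from rfl, e2] at ih2 h4
    push_cast at ih1 ih2 h4 ⊢
    linear_combination (24*((genV p q k)^2 - 4*q^k)^4) * hstep
      + genV p q k * ih2 - q^k * ih1
      + (4*(genU p q k)*((genV p q k)^2 - 4*q^k)) * h4

end aux

/-- The closed form for `s_5(n; p, q; k)`. -/
theorem stmt_8 (p q : ℝ) (k : ℕ) (hk : 1 ≤ k)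
    (hV : (genV p q k) ^ 2 - 4 * q ^ k ≠ 0) (n : ℕ) (hn : 4 ≤ n) :
    sgen p q k 5 n =
      (genU p q k) ^ 4 / (24 * ((genV p q k) ^ 2 - 4 * q ^ k) ^ 4) *
        ((genV p q k) ^ 4 * ((n : ℝ) - 1) * ((n : ℝ) - 2) * ((n : ℝ) - 3) * ((n : ℝ) - 4) *
            genU p q (n * k)
          - 4 * q ^ k * (genV p q k) ^ 3 * ((n : ℝ) - 2) * ((n : ℝ) - 3) * ((n : ℝ) - 4) *
              (2 * (n : ℝ) + 3) * genU p q ((n - 1) * k)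
          + 12 * q ^ (2 * k) * (genV p q k) ^ 2 * ((n : ℝ) - 3) * ((n : ℝ) - 4) *
              (2 * (n : ℝ) ^ 2 + 4 * (n : ℝ) - 1) * genU p q ((n - 2) * k)
          - 8 * q ^ (3 * k) * genV p q k * ((n : ℝ) - 4) * (2 * (n : ℝ) + 1) *
              (2 * (n : ℝ) ^ 2 + 2 * (n : ℝ) - 9) * genU p q ((n - 3) * k)
          + 16 * q ^ (4 * k) * ((n : ℝ) - 3) * ((n : ℝ) - 1) * ((n : ℝ) + 1) * ((n : ℝ) + 3) *
              genU p q ((n - 4) * k)) := by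
  obtain ⟨m, rfl⟩ : ∃ m, n = m + 4 := ⟨n - 4, by omega⟩
  have h5 := closed5 p q k (m+3)
  rw [show m+3+1 = m+4 from rfl] at h5
  have e2 := genU_keyA p q k m
  have e3 : genU p q (k*(m+3))
      = genV p q k * genU p q (k*(m+2)) - q^k * genU p q (k*(m+1)) := by
    have h := genU_keyA p q k (m+1)
    rwa [show m+1+2 = m+3 from rfl, show m+1+1 = m+2 from rfl] at h
  have e4 : genU p q (k*(m+4))
      = genV p q k * genU p q (k*(m+3)) - q^k * genU p q (k*(m+2)) := by
    have h := genU_keyA p q k (m+2)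
    rwa [show m+2+2 = m+4 from rfl, show m+2+1 = m+3 from rfl] at h
  rw [e4, e3, e2] at h5
  rw [show m+4-1 = m+3 from rfl, show m+4-2 = m+2 from rfl, show m+4-3 = m+1 from rfl,
    show m+4-4 = m from by omega,
    Nat.mul_comm (m+4) k, Nat.mul_comm (m+3) k, Nat.mul_comm (m+2) k,
    Nat.mul_comm (m+1) k, Nat.mul_comm m k,
    show 2*k = k*2 from Nat.mul_comm 2 k, show 3*k = k*3 from Nat.mul_comm 3 k,
    show 4*k = k*4 from Nat.mul_comm 4 k, pow_mul q k 2, pow_mul q k 3, pow_mul q k 4,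
    e4, e3, e2]
  have hD : (24:ℝ) * ((genV p q k) ^ 2 - 4 * q ^ k) ^ 4 ≠ 0 :=
    mul_ne_zero (by norm_num) (pow_ne_zero 4 hV)
  rw [div_mul_eq_mul_div, eq_div_iff hD]
  push_cast at h5 ⊢
  linear_combination h5
end

section
/- For every integer n ≥ 2, Σ over all triples (a,b,c) of nonnegative integers with a + b + c = n of F_a·F_b·F_c equals (1/50)·((5n²−9n−2)·F_{n−1} + (5n²−3n−2)·F_{n−2}), where F_m denotes the m-th Fibonacci number. -/
open Finset

private def fq (k : ℕ) : ℚ := Nat.fib k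

private def T (n : ℕ) : ℚ := ∑ k ∈ range (n + 1), fq k * fq (n - k)

private def S (n : ℕ) : ℚ := ∑ k ∈ range (n + 1), fq k * T (n - k)

private lemma fq_zero : fq 0 = 0 := by simp [fq]

private lemma fq_add_two (n : ℕ) : fq (n + 2) = fq (n + 1) + fq n := by
  simp [fq, Nat.fib_add_two]; push_cast; ring

private lemma T_zero : T 0 = 0 := by simp [T, fq]

private lemma T_one : T 1 = 0 := by simp [T, fq, Finset.sum_range_succ]

private lemma T_succ_succ (n : ℕ) : T (n + 2) = T (n + 1) + T n + fq (n + 1) := by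
  have h1 : T (n + 2) = (∑ k ∈ range (n + 1), fq k * fq (n + 2 - k))
      + fq (n + 1) * fq 1 + fq (n + 2) * fq 0 := by
    simp [T, Finset.sum_range_succ]
  have h2 : ∀ k ∈ range (n + 1), fq k * fq (n + 2 - k)
      = fq k * fq (n + 1 - k) + fq k * fq (n - k) := by
    intro k hk
    have hk' : k ≤ n := by simpa [Nat.lt_succ_iff] using hk
    have e1 : n + 2 - k = (n - k) + 2 := by omega
    have e2 : n + 1 - k = (n - k) + 1 := by omega
    rw [e1, e2, fq_add_two]; ring
  rw [h1, Finset.sum_congr rfl h2, Finset.sum_add_distrib]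
  have h3 : T (n + 1) = (∑ k ∈ range (n + 1), fq k * fq (n + 1 - k)) + fq (n + 1) * fq 0 := by
    simp [T, Finset.sum_range_succ]
  have h4 : T n = ∑ k ∈ range (n + 1), fq k * fq (n - k) := rfl
  rw [fq_zero] at h3 ⊢
  have : fq 1 = 1 := by simp [fq]
  rw [this]
  linarith [h3, h4.symm]

private lemma T_closed (n : ℕ) :
    T n = (2 * n * fq (n + 1) - (n + 1) * fq n) / 5 := by
  induction n using Nat.twoStepInduction with
  | zero => simp [T_zero, fq_zero]
  | one => rw [T_one]; norm_num [fq]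
  | more n ih1 ih2 =>
    rw [T_succ_succ, ih1, ih2, fq_add_two (n + 1), fq_add_two n]
    push_cast
    ring

private lemma S_succ_succ (n : ℕ) : S (n + 2) = S (n + 1) + S n + T (n + 1) := by
  have h1 : S (n + 2) = (∑ k ∈ range (n + 1), fq k * T (n + 2 - k))
      + fq (n + 1) * T 1 + fq (n + 2) * T 0 := by
    simp [S, Finset.sum_range_succ]
  have h2 : ∀ k ∈ range (n + 1), fq k * T (n + 2 - k)
      = fq k * T (n + 1 - k) + fq k * T (n - k) + fq k * fq (n + 1 - k) := by
    intro k hk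
    have hk' : k ≤ n := by simpa [Nat.lt_succ_iff] using hk
    have e1 : n + 2 - k = (n - k) + 2 := by omega
    have e2 : n + 1 - k = (n - k) + 1 := by omega
    rw [e1, e2, T_succ_succ]; ring
  rw [h1, Finset.sum_congr rfl h2, Finset.sum_add_distrib, Finset.sum_add_distrib]
  have h3 : S (n + 1) = (∑ k ∈ range (n + 1), fq k * T (n + 1 - k)) + fq (n + 1) * T 0 := by
    simp [S, Finset.sum_range_succ]
  have h4 : S n = ∑ k ∈ range (n + 1), fq k * T (n - k) := rfl
  have h5 : T (n + 1) = (∑ k ∈ range (n + 1), fq k * fq (n + 1 - k)) + fq (n + 1) * fq 0 := by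
    simp [T, Finset.sum_range_succ]
  rw [T_zero, T_one, fq_zero] at *
  linarith [h3, h4.symm, h5]

private lemma S_closed (n : ℕ) :
    S n = ((5 * n ^ 2 + 3 * n - 2) * fq n - 6 * n * fq (n + 1)) / 50 := by
  induction n using Nat.twoStepInduction with
  | zero => simp [S, T_zero, fq_zero]
  | one => simp [S, Finset.sum_range_succ, T_zero, T_one, fq_zero]; norm_num [fq]
  | more n ih1 ih2 =>
    rw [S_succ_succ, ih1, ih2, T_closed, fq_add_two (n + 1), fq_add_two n]
    push_cast
    ring

private lemma key (n : ℕ) :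
    ∑ t ∈ Finset.Nat.antidiagonalTuple 3 n, ∏ i, (Nat.fib (t i) : ℚ) = S n := by
  have hS : S n = ∑ x ∈ (range (n + 1)).sigma (fun k => range (n - k + 1)),
      fq x.1 * (fq x.2 * fq (n - x.1 - x.2)) := by
    rw [Finset.sum_sigma]
    simp only [S, T, Finset.mul_sum]
  rw [hS]
  refine Finset.sum_nbij' (fun t => ⟨t 0, t 1⟩)
    (fun x => ![x.1, x.2, n - x.1 - x.2]) ?_ ?_ ?_ ?_ ?_
  · intro t ht
    rw [Finset.Nat.mem_antidiagonalTuple] at ht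
    rw [Fin.sum_univ_three] at ht
    simp only [Finset.mem_sigma, Finset.mem_range]
    omega
  · intro x hx
    simp only [Finset.mem_sigma, Finset.mem_range] at hx
    rw [Finset.Nat.mem_antidiagonalTuple, Fin.sum_univ_three]
    simp only [Matrix.cons_val_zero, Matrix.cons_val_one, Matrix.head_cons, Matrix.cons_val_two, Matrix.tail_cons]
    omega
  · intro t ht
    rw [Finset.Nat.mem_antidiagonalTuple, Fin.sum_univ_three] at ht
    funext i
    fin_cases i <;> simp <;> omega
  · intro x hx
    simp only [Finset.mem_sigma, Finset.mem_range] at hx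
    simp
  · intro t ht
    rw [Finset.Nat.mem_antidiagonalTuple, Fin.sum_univ_three] at ht
    rw [Fin.prod_univ_three]
    have : n - t 0 - t 1 = t 2 := by omega
    simp [fq, this]
    ring

/-- `∑_{a+b+c=n} F_a F_b F_c
= (1/50) ((5n²-9n-2) F_{n-1} + (5n²-3n-2) F_{n-2})` for `n ≥ 2`. -/
theorem stmt_11 (n : ℕ) (hn : 2 ≤ n) :
    ∑ t ∈ Finset.Nat.antidiagonalTuple 3 n, ∏ i, (Nat.fib (t i) : ℚ) =
      (1 / 50) * ((5 * (n : ℚ) ^ 2 - 9 * (n : ℚ) - 2) * (Nat.fib (n - 1) : ℚ)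
        + (5 * (n : ℚ) ^ 2 - 3 * (n : ℚ) - 2) * (Nat.fib (n - 2) : ℚ)) := by
  obtain ⟨m, rfl⟩ : ∃ m, n = m + 2 := ⟨n - 2, by omega⟩
  rw [key, S_closed]
  have e1 : m + 2 - 1 = m + 1 := rfl
  have e2 : m + 2 - 2 = m := rfl
  rw [e1, e2, fq_add_two (m + 1), fq_add_two m]
  simp only [fq]
  push_cast
  ring
end
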